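/- arXiv:1004.3794 — 4 statements merged into one kernel-verified Lean document; each statement's English description precedes it below -/
import Mathlib

section
/- Let H_in and H_out be finite-dimensional Hilbert spaces, and let S_in be a set of density matrices on H_in and S_out an abelian set of density matrices on H_out (all pairwise commuting, hence simultaneously diagonal in an orthonormal basis (|i⟩)_{i=1}^d). Suppose L: L(H_in) → L(H_out) is a linear map such that L(S_in) ⊆ S_out and for every POVM (P^i) on H_out the dual images L*(P^i) are statistically equivalent on S_in to some POVM on H_in. Then there exists a completely positive trace-preserving map E: L(H_in) → L(H_out) with E(ρ) = L(ρ) for all ρ ∈ S_in; moreover E can be taken of the form E(ρ) = Σ_i Tr[Π̃^i ρ] |i⟩⟨i| for some POVM (Π̃^i) on H_in. -/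
open scoped BigOperators Matrix Kronecker ComplexOrder
open Matrix

/-- A density matrix: positive semidefinite with unit trace. -/
def IsDensity {n : Type*} [Fintype n] (ρ : Matrix n n ℂ) : Prop :=
  ρ.PosSemidef ∧ ρ.trace = 1

/-- A POVM indexed by a finite decision set. -/
def IsPOVM {n X : Type*} [Fintype n] [DecidableEq n] [Fintype X]
    (P : X → Matrix n n ℂ) : Prop :=
  (∀ i, (P i).PosSemidef) ∧ ∑ i, P i = 1

/-- Partial trace over the first tensor factor. -/
noncomputable def ptrA {a b : Type*} [Fintype a] (M : Matrix (a × b) (a × b) ℂ) : Matrix b b ℂ :=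
  Matrix.of fun y y' => ∑ x, M (x, y) (x, y')

/-- Partial trace over the second tensor factor. -/
noncomputable def ptrB {a b : Type*} [Fintype b] (M : Matrix (a × b) (a × b) ℂ) : Matrix a a ℂ :=
  Matrix.of fun x x' => ∑ y, M (x, y) (x', y)

/-- The local state space of subsystem B induced by a bipartite state. -/
def SB {a b : Type*} [Fintype a] [DecidableEq a] [Fintype b] [DecidableEq b]
    (ρ : Matrix (a × b) (a × b) ℂ) : Set (Matrix b b ℂ) :=
  {σ | ∃ (P : Matrix a a ℂ) (r : ℝ), P.PosSemidef ∧ ((1 : Matrix a a ℂ) - P).PosSemidef ∧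
    0 < r ∧ ((P ⊗ₖ (1 : Matrix b b ℂ)) * ρ).trace = (r : ℂ) ∧
    σ = (r : ℂ)⁻¹ • ptrA ((P ⊗ₖ (1 : Matrix b b ℂ)) * ρ)}

/-- The map `id_A ⊗ L` acting on bipartite matrices. -/
def idTensor {a b b' : Type*} (L : Matrix b b ℂ →ₗ[ℂ] Matrix b' b' ℂ)
    (ρ : Matrix (a × b) (a × b) ℂ) : Matrix (a × b') (a × b') ℂ :=
  Matrix.of fun x y => L (Matrix.of fun u v => ρ (x.1, u) (y.1, v)) x.2 y.2

/-- Completely positive trace-preserving map, via a Kraus representation. -/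
def IsCPTP {n m : Type*} [Fintype n] [DecidableEq n] [Fintype m] [DecidableEq m]
    (E : Matrix n n ℂ →ₗ[ℂ] Matrix m m ℂ) : Prop :=
  ∃ (k : ℕ) (K : Fin k → Matrix m n ℂ),
    (∑ j, (K j)ᴴ * K j = 1) ∧ ∀ X, E X = ∑ j, K j * X * (K j)ᴴ

/-- Optimal averaged payoff of a quantum statistical model in a decision problem. -/
noncomputable def qBayesSup {Θ n X : Type*} [Fintype Θ] [Fintype n] [DecidableEq n] [Fintype X]
    (ρ : Θ → Matrix n n ℂ) (ℓ : Θ → X → ℝ) : ℝ :=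
  sSup {s | ∃ P : X → Matrix n n ℂ, IsPOVM P ∧
    s = (Fintype.card Θ : ℝ)⁻¹ * ∑ θ, ∑ i, ℓ θ i * ((ρ θ * P i).trace).re}

/-- Optimal payoff of player B in a quantum statistical decision game. -/
noncomputable def gameSup {a b X : Type*} [Fintype a] [Fintype b] [DecidableEq b] [Fintype X]
    (ρ : Matrix (a × b) (a × b) ℂ) (O : X → Matrix a a ℂ) : ℝ :=
  sSup {s | ∃ P : X → Matrix b b ℂ, IsPOVM P ∧
    s = (∑ i, (((O i) ⊗ₖ (P i)) * ρ).trace).re}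

/-!
Since every output state is diagonal, the output of `L` on `S_in` is determined by the
diagonal entries `Tr[|i⟩⟨i| L(ρ)]`, i.e. by the statistics of the computational-basis
measurement. The hypothesis on `L*` turns this measurement into a POVM `(Π̃ⁱ)` on the input
with the same statistics on `S_in`, and the measure-and-prepare channel
`ρ ↦ ∑ᵢ Tr[Π̃ⁱ ρ] |i⟩⟨i|` reproduces `L` there. It is completely positive with Kraus operators
`|i⟩⟨k| Bᵢ`, where `Π̃ⁱ = Bᵢᴴ Bᵢ`.
-/

lemma Matrix.PosSemidef.exists_eq_conjTranspose_mul_self {n : Type*} [Fintype n] [DecidableEq n]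
    {P : Matrix n n ℂ} (hP : P.PosSemidef) : ∃ B : Matrix n n ℂ, P = Bᴴ * B := by
  open MatrixOrder in
  exact ⟨CFC.sqrt P, by
    rw [(CFC.sqrt_nonneg P).posSemidef.1, CFC.sqrt_mul_sqrt_self P hP.nonneg]⟩

lemma isPOVM_single_diag {m : Type*} [Fintype m] [DecidableEq m] :
    IsPOVM fun i : m => single i i (1 : ℂ) :=
  ⟨fun i => by simpa using posSemidef_conjTranspose_mul_self (single i i (1 : ℂ)),
    sum_single_one⟩

lemma IsPOVM.comp_equiv {n X Y : Type*} [Fintype n] [DecidableEq n] [Fintype X] [Fintype Y]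
    {P : X → Matrix n n ℂ} (hP : IsPOVM P) (e : Y ≃ X) : IsPOVM (P ∘ e) :=
  ⟨fun i => hP.1 (e i), (Equiv.sum_comp e P).trans hP.2⟩

lemma isCPTP_of_kraus {n m ι : Type*} [Fintype n] [DecidableEq n] [Fintype m] [DecidableEq m]
    [Fintype ι] {E : Matrix n n ℂ →ₗ[ℂ] Matrix m m ℂ} (K : ι → Matrix m n ℂ)
    (hK : ∑ j, (K j)ᴴ * K j = 1) (hE : ∀ X, E X = ∑ j, K j * X * (K j)ᴴ) : IsCPTP E := by
  let e := Fintype.equivFin ι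
  refine ⟨Fintype.card ι, K ∘ e.symm, ?_, fun X => ?_⟩
  · rw [← hK]
    exact Equiv.sum_comp e.symm fun j => (K j)ᴴ * K j
  · rw [hE]
    exact (Equiv.sum_comp e.symm fun j => K j * X * (K j)ᴴ).symm

noncomputable def measurePrepare {n m : Type*} [Fintype n] [Fintype m] [DecidableEq m]
    (P : m → Matrix n n ℂ) : Matrix n n ℂ →ₗ[ℂ] Matrix m m ℂ where
  toFun ρ := ∑ i, (P i * ρ).trace • single i i 1
  map_add' ρ σ := by simp only [Matrix.mul_add, trace_add, add_smul, Finset.sum_add_distrib]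
  map_smul' c ρ := by
    simp only [Matrix.mul_smul, trace_smul, smul_eq_mul, mul_smul, Finset.smul_sum,
      RingHom.id_apply]

lemma measurePrepare_apply {n m : Type*} [Fintype n] [Fintype m] [DecidableEq m]
    (P : m → Matrix n n ℂ) (ρ : Matrix n n ℂ) :
    measurePrepare P ρ = ∑ i, (P i * ρ).trace • single i i 1 :=
  rfl

lemma single_one_mul_conjTranspose_mul_self {n m : Type*} [Fintype n] [Fintype m]
    [DecidableEq n] [DecidableEq m] (i : m) (k : n) (B : Matrix n n ℂ) :
    (single i k (1 : ℂ) * B)ᴴ * (single i k (1 : ℂ) * B) = Bᴴ * single k k (1 : ℂ) * B := by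
  rw [conjTranspose_mul, conjTranspose_single, star_one, Matrix.mul_assoc,
    ← Matrix.mul_assoc (single k i (1 : ℂ)), single_mul_single_same, one_mul, Matrix.mul_assoc]

lemma single_one_mul_mul_conjTranspose {n m : Type*} [Fintype n] [DecidableEq n] [DecidableEq m]
    (i : m) (k : n) (B X : Matrix n n ℂ) :
    single i k (1 : ℂ) * B * X * (single i k (1 : ℂ) * B)ᴴ =
      (B * X * Bᴴ) k k • single i i (1 : ℂ) := by
  rw [conjTranspose_mul, conjTranspose_single, star_one, ← Matrix.mul_assoc,
    Matrix.mul_assoc _ B, Matrix.mul_assoc _ (B * X), single_mul_mul_single, smul_single,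
    smul_eq_mul, one_mul, mul_one]

theorem isCPTP_measurePrepare {n m : Type*} [Fintype n] [DecidableEq n] [Fintype m]
    [DecidableEq m] {P : m → Matrix n n ℂ} (hP : IsPOVM P) : IsCPTP (measurePrepare P) := by
  choose B hB using fun i => (hP.1 i).exists_eq_conjTranspose_mul_self
  refine isCPTP_of_kraus (fun p : m × n => single p.1 p.2 (1 : ℂ) * B p.1) ?_ fun X => ?_
  · calc ∑ p : m × n, (single p.1 p.2 (1 : ℂ) * B p.1)ᴴ * (single p.1 p.2 (1 : ℂ) * B p.1)
        = ∑ i, (B i)ᴴ * (∑ k : n, single k k (1 : ℂ)) * B i := by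
          simp only [Fintype.sum_prod_type, single_one_mul_conjTranspose_mul_self,
            Finset.mul_sum, Finset.sum_mul]
      _ = 1 := by simp only [sum_single_one, Matrix.mul_one, ← hB, hP.2]
  · calc measurePrepare P X
        = ∑ i, ∑ k : n, (B i * X * (B i)ᴴ) k k • single i i (1 : ℂ) := by
          refine Finset.sum_congr rfl fun i _ => ?_
          rw [← Finset.sum_smul, hB, Matrix.mul_assoc, trace_mul_comm]
          rfl
      _ = _ := by
          simp only [Fintype.sum_prod_type, single_one_mul_mul_conjTranspose]

lemma measurePrepare_apply_eq_of_isDiag {n m : Type*} [Fintype n] [Fintype m] [DecidableEq m]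
    {P : m → Matrix n n ℂ} {ρ : Matrix n n ℂ} {σ : Matrix m m ℂ} (hσ : σ.IsDiag)
    (h : ∀ i, (P i * ρ).trace = σ i i) : measurePrepare P ρ = σ := by
  simp only [measurePrepare_apply, h, smul_single, smul_eq_mul, mul_one]
  exact (sum_single_eq_diagonal fun i => σ i i).trans hσ.diagonal_diag

theorem stmt7_general {n m : Type*} [Fintype n] [DecidableEq n] [Fintype m] [DecidableEq m]
    (Sin : Set (Matrix n n ℂ))
    (Sout : Set (Matrix m m ℂ)) (hSout : ∀ σ ∈ Sout, IsDensity σ ∧ σ.IsDiag)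
    (L : Matrix n n ℂ →ₗ[ℂ] Matrix m m ℂ)
    (hmap : ∀ ρ ∈ Sin, L ρ ∈ Sout)
    (hdual : ∀ (X : Type) [Fintype X] (P : X → Matrix m m ℂ), IsPOVM P →
      ∃ Q : X → Matrix n n ℂ, IsPOVM Q ∧
        ∀ i, ∀ ρ ∈ Sin, ((P i) * L ρ).trace = ((Q i) * ρ).trace) :
    ∃ E : Matrix n n ℂ →ₗ[ℂ] Matrix m m ℂ, IsCPTP E ∧ (∀ ρ ∈ Sin, E ρ = L ρ) ∧
      ∃ Pit : m → Matrix n n ℂ, IsPOVM Pit ∧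
        ∀ ρ : Matrix n n ℂ, E ρ = ∑ i, ((Pit i * ρ).trace) • Matrix.single i i 1 := by
  let e := Fintype.equivFin m
  obtain ⟨Q, hQ, hQL⟩ := hdual _ _ (isPOVM_single_diag.comp_equiv e.symm)
  have hPit : IsPOVM (Q ∘ e) := hQ.comp_equiv e
  refine ⟨measurePrepare (Q ∘ e), isCPTP_measurePrepare hPit, fun ρ hρ => ?_, Q ∘ e, hPit,
    measurePrepare_apply _⟩
  refine measurePrepare_apply_eq_of_isDiag (hSout _ (hmap ρ hρ)).2 fun i => ?_
  rw [Function.comp_apply, ← hQL (e i) ρ hρ, Function.comp_apply, e.symm_apply_apply,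
    trace_single_mul, one_smul]

/-- Classical-output extension theorem for statistical morphisms (Proposition 2). -/
theorem stmt7 {n m : Type*} [Fintype n] [DecidableEq n] [Fintype m] [DecidableEq m]
    (Sin : Set (Matrix n n ℂ)) (hSin : ∀ ρ ∈ Sin, IsDensity ρ)
    (Sout : Set (Matrix m m ℂ)) (hSout : ∀ σ ∈ Sout, IsDensity σ ∧ σ.IsDiag)
    (L : Matrix n n ℂ →ₗ[ℂ] Matrix m m ℂ)
    (hmap : ∀ ρ ∈ Sin, L ρ ∈ Sout)
    (hdual : ∀ (X : Type) [Fintype X] (P : X → Matrix m m ℂ), IsPOVM P →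
      ∃ Q : X → Matrix n n ℂ, IsPOVM Q ∧
        ∀ i, ∀ ρ ∈ Sin, ((P i) * L ρ).trace = ((Q i) * ρ).trace) :
    ∃ E : Matrix n n ℂ →ₗ[ℂ] Matrix m m ℂ, IsCPTP E ∧ (∀ ρ ∈ Sin, E ρ = L ρ) ∧
      ∃ Pit : m → Matrix n n ℂ, IsPOVM Pit ∧
        ∀ ρ : Matrix n n ℂ, E ρ = ∑ i, ((Pit i * ρ).trace) • Matrix.single i i 1 :=
  stmt7_general Sin Sout hSout L hmap hdual
end

section
/- Let S_in be a set of density matrices on H_in, let H₀ ≅ H_out (dimension d), and let S₀ be a complete state space on H₀ (containing d² linearly independent density matrices). Suppose L: L(H_in) → L(H_out) is linear, such that id ⊗ L maps S₀ × S_in into S₀ × S_out where S_out is a set of density matrices, and such that for the Bell POVM (B^i) on H₀ ⊗ H_out there exists a POVM (B̃^i) on H₀ ⊗ H_in with Tr[(id ⊗ L*)(B^i)(ω ⊗ σ)] = Tr[B̃^i (ω ⊗ σ)] for all ω ∈ S₀, σ ∈ S_in, and all i. Then there exists a completely positive trace-preserving map E: L(H_in) → L(H_out) with E(σ) = L(σ)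 for all σ ∈ S_in. -/
open scoped BigOperators Matrix Kronecker ComplexOrder
open Matrix

/-- The Weyl (shift-and-multiply) unitaries on `ℂ^d`. -/
noncomputable def weyl (d : ℕ) [NeZero d] (ab : ZMod d × ZMod d) :
    Matrix (ZMod d) (ZMod d) ℂ :=
  Matrix.of fun k l =>
    if k = l + ab.1 then Complex.exp (2 * Real.pi * Complex.I * (ab.2.val * l.val) / d) else 0

/-- The maximally entangled state `Ψ⁺ = d⁻¹ Σ_{i,j} |i⟩⟨j| ⊗ |i⟩⟨j|`. -/
noncomputable def maxEnt (d : ℕ) [NeZero d] :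
    Matrix (ZMod d × ZMod d) (ZMod d × ZMod d) ℂ :=
  Matrix.of fun r c => if r.1 = r.2 ∧ c.1 = c.2 then (d : ℂ)⁻¹ else 0

/-- The generalized Bell projectors. -/
noncomputable def bell (d : ℕ) [NeZero d] (ab : ZMod d × ZMod d) :
    Matrix (ZMod d × ZMod d) (ZMod d × ZMod d) ℂ :=
  (weyl d ab ⊗ₖ (1 : Matrix (ZMod d) (ZMod d) ℂ)) * maxEnt d *
    (weyl d ab ⊗ₖ (1 : Matrix (ZMod d) (ZMod d) ℂ))ᴴ

/-! Since `S0` spans all `d × d` matrices, the trace identities of the Bell hypothesis pin down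
the partial pairings: `Tr_B[B̃ᵢ (1 ⊗ σ)] = Tr_B[Bᵢ (1 ⊗ L σ)] = d⁻¹ Wᵢ (L σ)ᵀ Wᵢᴴ` for `σ ∈ S_in`,
where `Wᵢ` is the Weyl unitary of the Bell outcome `i`. Undoing the Weyl twist and averaging over
the `d²` outcomes recovers `L σ` as the image of `σ` under the teleportation-type map
`X ↦ d⁻¹ Σᵢ Wᵢᵀ Tr_B[B̃ᵢ (1 ⊗ X)]ᵀ (Wᵢᵀ)ᴴ`. This map is completely positive, with Kraus operators
`Wᵢᵀ Kᵢₚ` where the `Kᵢₚ` are the rows of a factor `Sᵢ` of `d⁻¹ B̃ᵢ = Sᵢᴴ Sᵢ` read as matrices,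
and it is trace preserving because `Σᵢ B̃ᵢ = 1`. -/

namespace Matrix

variable {R a : Type*} [Fintype a]

theorem eq_of_trace_mul_eq_of_span_eq_top [CommSemiring R] [DecidableEq a]
    {S : Set (Matrix a a R)} (hS : Submodule.span R S = ⊤) {A B : Matrix a a R}
    (h : ∀ ω ∈ S, (A * ω).trace = (B * ω).trace) : A = B := by
  have := LinearMap.ext_on hS (f := (traceLinearMap a R R).comp (LinearMap.mulLeft R A))
    (g := (traceLinearMap a R R).comp (LinearMap.mulLeft R B)) h
  exact ext_iff_trace_mul_right.2 (LinearMap.congr_fun this)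

end Matrix

section PartialTrace

variable {a b : Type*}

theorem trace_mul_kronecker_one [Fintype a] [Fintype b] [DecidableEq b]
    (N : Matrix (a × b) (a × b) ℂ) (ω : Matrix a a ℂ) :
    (N * (ω ⊗ₖ (1 : Matrix b b ℂ))).trace = (ptrB N * ω).trace := by
  simp only [trace, diag, mul_apply, ptrB, of_apply, kroneckerMap_apply, one_apply,
    Fintype.sum_prod_type, mul_ite, mul_one, mul_zero, Finset.sum_mul]
  simp [Finset.sum_ite_eq', Finset.sum_comm (γ := b)]

theorem trace_mul_kronecker [Fintype a] [Fintype b] [DecidableEq a] [DecidableEq b]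
    (M : Matrix (a × b) (a × b) ℂ) (ω : Matrix a a ℂ) (σ : Matrix b b ℂ) :
    (M * (ω ⊗ₖ σ)).trace = (ptrB (M * (1 ⊗ₖ σ)) * ω).trace := by
  rw [← trace_mul_kronecker_one, Matrix.mul_assoc, ← mul_kronecker_mul, Matrix.one_mul,
    Matrix.mul_one]

theorem ptrB_mul_one_kronecker_apply [Fintype a] [Fintype b] [DecidableEq a]
    (M : Matrix (a × b) (a × b) ℂ) (σ : Matrix b b ℂ) (x x' : a) :
    ptrB (M * (1 ⊗ₖ σ)) x x' = ∑ u, ∑ v, M (x, u) (x', v) * σ v u := by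
  simp [ptrB, mul_apply, kroneckerMap_apply, one_apply, Fintype.sum_prod_type, ite_mul,
    mul_ite, Finset.sum_ite_eq']

theorem ptrB_smul [Fintype b] (c : ℂ) (M : Matrix (a × b) (a × b) ℂ) :
    ptrB (c • M) = c • ptrB M := by
  ext x x'
  simp [ptrB, Finset.mul_sum]

theorem sum_ptrA_eq_smul_one {ι : Type*} [Fintype ι] [Fintype a] [DecidableEq a]
    [Fintype b] [DecidableEq b] {B : ι → Matrix (a × b) (a × b) ℂ} {c : ℂ}
    (hB : ∑ i, B i = c • 1) : ∑ i, ptrA (B i) = (Fintype.card a * c) • 1 := by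
  ext v u
  have hentry : ∀ x, ∑ i, B i (x, v) (x, u) = c * (1 : Matrix b b ℂ) v u := fun x => by
    simpa [Matrix.sum_apply, one_apply] using congr_fun (congr_fun hB (x, v)) (x, u)
  simp only [Matrix.sum_apply, ptrA, of_apply, Matrix.smul_apply, smul_eq_mul]
  rw [Finset.sum_comm]
  simp [hentry, mul_assoc]

end PartialTrace

theorem idTensor_kronecker {a b b' : Type*} (L : Matrix b b ℂ →ₗ[ℂ] Matrix b' b' ℂ)
    (ω : Matrix a a ℂ) (σ : Matrix b b ℂ) : idTensor L (ω ⊗ₖ σ) = ω ⊗ₖ L σ := by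
  ext x y
  have hblock : (Matrix.of fun u v => (ω ⊗ₖ σ) (x.1, u) (y.1, v)) = ω x.1 y.1 • σ := by
    ext u v
    simp
  rw [idTensor, of_apply, hblock]
  simp

section Kraus

variable {ι m n : Type*} [Fintype ι]

noncomputable def krausMap [Fintype n] (K : ι → Matrix m n ℂ) :
    Matrix n n ℂ →ₗ[ℂ] Matrix m m ℂ where
  toFun X := ∑ j, K j * X * (K j)ᴴ
  map_add' X Y := by simp [Matrix.mul_add, Matrix.add_mul, Finset.sum_add_distrib]
  map_smul' c X := by simp [Finset.smul_sum]

theorem krausMap_apply [Fintype n] (K : ι → Matrix m n ℂ) (X : Matrix n n ℂ) :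
    krausMap K X = ∑ j, K j * X * (K j)ᴴ := rfl

theorem krausMap_prod_apply {κ : Type*} [Fintype κ] [Fintype n] (K : ι × κ → Matrix m n ℂ)
    (X : Matrix n n ℂ) : krausMap K X = ∑ i, krausMap (fun p => K (i, p)) X :=
  Fintype.sum_prod_type _

theorem isCPTP_krausMap [Fintype m] [Fintype n] [DecidableEq m] [DecidableEq n]
    {K : ι → Matrix m n ℂ} (hK : ∑ j, (K j)ᴴ * K j = 1) : IsCPTP (krausMap K) := by
  let e := (Fintype.equivFin ι).symm
  refine ⟨Fintype.card ι, K ∘ e, ?_, fun X => ?_⟩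
  · simpa only [Function.comp_apply, e.sum_comp (fun j => (K j)ᴴ * K j)] using hK
  · exact (e.sum_comp fun j => K j * X * (K j)ᴴ).symm

theorem krausMap_mul_left [Fintype m] [Fintype n] (U : Matrix m m ℂ) (K : ι → Matrix m n ℂ)
    (X : Matrix n n ℂ) : krausMap (fun j => U * K j) X = U * krausMap K X * Uᴴ := by
  simp only [krausMap_apply, conjTranspose_mul, Finset.mul_sum, Finset.sum_mul, Matrix.mul_assoc]

theorem sum_conjTranspose_mul_mul_left [Fintype m] [DecidableEq m] {U : Matrix m m ℂ}
    (hU : Uᴴ * U = 1) (K : ι → Matrix m n ℂ) : ∑ j, (U * K j)ᴴ * (U * K j) = ∑ j, (K j)ᴴ * K j := by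
  simp only [conjTranspose_mul, Matrix.mul_assoc, ← Matrix.mul_assoc Uᴴ, hU, Matrix.one_mul]

end Kraus

section Reshape

variable {a b : Type*} [Fintype a] [Fintype b]

def reshapeRow (S : Matrix (a × b) (a × b) ℂ) (p : a × b) : Matrix a b ℂ :=
  Matrix.of fun x v => S p (x, v)

theorem sum_conjTranspose_reshapeRow_mul (S : Matrix (a × b) (a × b) ℂ) :
    ∑ p, (reshapeRow S p)ᴴ * reshapeRow S p = ptrA (Sᴴ * S) := by
  ext v u
  simp only [Matrix.sum_apply, mul_apply, conjTranspose_apply, reshapeRow, ptrA, of_apply]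
  exact Finset.sum_comm

theorem krausMap_reshapeRow [DecidableEq a] [DecidableEq b] (S : Matrix (a × b) (a × b) ℂ)
    (X : Matrix b b ℂ) : krausMap (reshapeRow S) X = (ptrB (Sᴴ * S * (1 ⊗ₖ X)))ᵀ := by
  ext x x'
  simp only [krausMap_apply, transpose_apply, ptrB_mul_one_kronecker_apply, Matrix.sum_apply,
    mul_apply, conjTranspose_apply, reshapeRow, of_apply, Finset.sum_mul]
  rw [Finset.sum_comm]
  refine Finset.sum_congr rfl fun u _ => ?_
  rw [Finset.sum_comm]
  refine Finset.sum_congr rfl fun v _ => Finset.sum_congr rfl fun p _ => ?_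
  ring

end Reshape

theorem Complex.star_exp_mul_exp_of_re_eq_zero {z : ℂ} (hz : z.re = 0) :
    star (Complex.exp z) * Complex.exp z = 1 := by
  rw [Complex.star_def, ← Complex.exp_conj, ← Complex.exp_add, add_comm, Complex.add_conj, hz]
  simp

section Bell

variable (d : ℕ) [NeZero d]

theorem weyl_conjTranspose_mul_self (ab : ZMod d × ZMod d) : (weyl d ab)ᴴ * weyl d ab = 1 := by
  ext l l'
  rw [mul_apply, Finset.sum_eq_single (l + ab.1)]
  · by_cases h : l = l'
    · subst h
      simp only [conjTranspose_apply, weyl, of_apply, if_true, one_apply_eq]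
      exact Complex.star_exp_mul_exp_of_re_eq_zero (by simp [Complex.div_re, -ZMod.natCast_val])
    · simp [weyl, h]
  · intro k _ hk
    simp [weyl, hk]
  · simp

theorem bell_apply (ab : ZMod d × ZMod d) (x u x' v : ZMod d) :
    bell d ab (x, u) (x', v) = (d : ℂ)⁻¹ * (weyl d ab x u * star (weyl d ab x' v)) := by
  simp only [bell, mul_apply, conjTranspose_apply, kroneckerMap_apply, maxEnt, of_apply,
    one_apply, Fintype.sum_prod_type]
  simp [mul_ite, ite_and, apply_ite (star : ℂ → ℂ), Finset.sum_ite_eq, Finset.sum_ite_eq',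
    mul_comm, mul_assoc, mul_left_comm]

theorem ptrB_bell_mul_one_kronecker (ab : ZMod d × ZMod d) (τ : Matrix (ZMod d) (ZMod d) ℂ) :
    ptrB (bell d ab * (1 ⊗ₖ τ)) = (d : ℂ)⁻¹ • (weyl d ab * τᵀ * (weyl d ab)ᴴ) := by
  ext x x'
  simp only [ptrB_mul_one_kronecker_apply, bell_apply, Matrix.smul_apply, mul_apply,
    conjTranspose_apply, transpose_apply, smul_eq_mul, Finset.mul_sum, Finset.sum_mul]
  rw [Finset.sum_comm]
  refine Finset.sum_congr rfl fun u _ => Finset.sum_congr rfl fun v _ => ?_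
  ring

theorem weyl_transpose_mul_conjTranspose_self (ab : ZMod d × ZMod d) :
    (weyl d ab)ᵀ * ((weyl d ab)ᵀ)ᴴ = 1 := by
  rw [conjTranspose_transpose_eq_transpose_conjTranspose, ← transpose_mul,
    weyl_conjTranspose_mul_self, transpose_one]

theorem weyl_transpose_conjTranspose_mul_self (ab : ZMod d × ZMod d) :
    ((weyl d ab)ᵀ)ᴴ * (weyl d ab)ᵀ = 1 :=
  mul_eq_one_comm.1 (weyl_transpose_mul_conjTranspose_self d ab)

theorem weyl_transpose_mul_transpose_mul (ab : ZMod d × ZMod d)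
    (τ : Matrix (ZMod d) (ZMod d) ℂ) :
    (weyl d ab)ᵀ * (weyl d ab * τᵀ * (weyl d ab)ᴴ)ᵀ * ((weyl d ab)ᵀ)ᴴ = τ := by
  have h := weyl_transpose_mul_conjTranspose_self d ab
  simp only [transpose_mul, transpose_transpose,
    ← conjTranspose_transpose_eq_transpose_conjTranspose, Matrix.mul_assoc, h, Matrix.mul_one]
  rw [← Matrix.mul_assoc, h, Matrix.one_mul]

end Bell

open scoped MatrixOrder in
theorem exists_isCPTP_eq_of_ptrB_eq_bell {n : Type*} [Fintype n] [DecidableEq n] {d : ℕ}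
    [NeZero d] {Bt : ZMod d × ZMod d → Matrix (ZMod d × n) (ZMod d × n) ℂ} (hBt : IsPOVM Bt)
    {Sin : Set (Matrix n n ℂ)} (L : Matrix n n ℂ → Matrix (ZMod d) (ZMod d) ℂ)
    (hL : ∀ σ ∈ Sin, ∀ ab, ptrB (Bt ab * (1 ⊗ₖ σ)) = ptrB (bell d ab * (1 ⊗ₖ L σ))) :
    ∃ E : Matrix n n ℂ →ₗ[ℂ] Matrix (ZMod d) (ZMod d) ℂ, IsCPTP E ∧ ∀ σ ∈ Sin, E σ = L σ := by
  have hpos : ∀ ab, ((d : ℂ)⁻¹ • Bt ab).PosSemidef := fun ab =>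
    (hBt.1 ab).smul (by positivity)
  choose S hS using fun ab => CStarAlgebra.nonneg_iff_eq_star_mul_self.1 (hpos ab).nonneg
  simp only [star_eq_conjTranspose] at hS
  refine ⟨krausMap fun j : (ZMod d × ZMod d) × (ZMod d × n) =>
    (weyl d j.1)ᵀ * reshapeRow (S j.1) j.2, isCPTP_krausMap ?_, fun σ hσ => ?_⟩
  · rw [Fintype.sum_prod_type]
    simp only [sum_conjTranspose_mul_mul_left (weyl_transpose_conjTranspose_mul_self d _),
      sum_conjTranspose_reshapeRow_mul, ← hS]
    rw [sum_ptrA_eq_smul_one (by rw [← Finset.smul_sum, hBt.2])]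
    simp [ZMod.card]
  · rw [krausMap_prod_apply]
    simp only [krausMap_mul_left, krausMap_reshapeRow, ← hS, smul_mul, ptrB_smul, hL σ hσ,
      ptrB_bell_mul_one_kronecker, transpose_smul, Matrix.mul_smul, Matrix.smul_mul,
      weyl_transpose_mul_transpose_mul]
    rw [Finset.sum_const, Finset.card_univ, Fintype.card_prod, ZMod.card, smul_smul,
      ← Nat.cast_smul_eq_nsmul ℂ, smul_smul]
    have hd : (d : ℂ) ≠ 0 := NeZero.ne _
    rw [Nat.cast_mul, show (d : ℂ) * d * ((d : ℂ)⁻¹ * (d : ℂ)⁻¹) = 1 by field_simp, one_smul]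

theorem stmt10_general {n : Type*} [Fintype n] [DecidableEq n] (d : ℕ) [NeZero d]
    (S0 : Set (Matrix (ZMod d) (ZMod d) ℂ))
    (hS0complete : ∃ f : Fin (d ^ 2) → Matrix (ZMod d) (ZMod d) ℂ,
      (∀ k, f k ∈ S0) ∧ LinearIndependent ℂ f)
    (Sin : Set (Matrix n n ℂ))
    (L : Matrix n n ℂ →ₗ[ℂ] Matrix (ZMod d) (ZMod d) ℂ)
    (hBell : ∃ Bt : (ZMod d × ZMod d) → Matrix (ZMod d × n) (ZMod d × n) ℂ,
      IsPOVM Bt ∧ ∀ ab : ZMod d × ZMod d, ∀ ω ∈ S0, ∀ σ ∈ Sin,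
        (bell d ab * idTensor L (ω ⊗ₖ σ)).trace = (Bt ab * (ω ⊗ₖ σ)).trace) :
    ∃ E : Matrix n n ℂ →ₗ[ℂ] Matrix (ZMod d) (ZMod d) ℂ,
      IsCPTP E ∧ ∀ σ ∈ Sin, E σ = L σ := by
  obtain ⟨f, hfS0, hf⟩ := hS0complete
  obtain ⟨Bt, hBt, hBtL⟩ := hBell
  have hspan : Submodule.span ℂ S0 = ⊤ := by
    have : Nonempty (Fin (d ^ 2)) := ⟨⟨0, pow_pos (NeZero.pos d) 2⟩⟩
    refine top_le_iff.1 ((hf.span_eq_top_of_card_eq_finrank ?_).ge.trans (Submodule.span_mono ?_))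
    · simp [Module.finrank_matrix, ZMod.card, sq]
    · rintro _ ⟨k, rfl⟩
      exact hfS0 k
  refine exists_isCPTP_eq_of_ptrB_eq_bell hBt L fun σ hσ ab =>
    eq_of_trace_mul_eq_of_span_eq_top hspan fun ω hω => ?_
  rw [← trace_mul_kronecker, ← trace_mul_kronecker, ← idTensor_kronecker]
  exact (hBtL ab ω hω σ hσ).symm

/-- Entanglement-assisted extension theorem for statistical morphisms (Proposition 1). -/
theorem stmt10 {n : Type*} [Fintype n] [DecidableEq n] (d : ℕ) [NeZero d]
    (S0 : Set (Matrix (ZMod d) (ZMod d) ℂ)) (hS0 : ∀ ω ∈ S0, IsDensity ω)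
    (hS0complete : ∃ f : Fin (d ^ 2) → Matrix (ZMod d) (ZMod d) ℂ,
      (∀ k, f k ∈ S0) ∧ LinearIndependent ℂ f)
    (Sin : Set (Matrix n n ℂ)) (hSin : ∀ ρ ∈ Sin, IsDensity ρ)
    (Sout : Set (Matrix (ZMod d) (ZMod d) ℂ)) (hSout : ∀ τ ∈ Sout, IsDensity τ)
    (L : Matrix n n ℂ →ₗ[ℂ] Matrix (ZMod d) (ZMod d) ℂ)
    (hmap : ∀ ω ∈ S0, ∀ σ ∈ Sin, ∃ ω' ∈ S0, ∃ τ ∈ Sout,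
      idTensor L (ω ⊗ₖ σ) = ω' ⊗ₖ τ)
    (hBell : ∃ Bt : (ZMod d × ZMod d) → Matrix (ZMod d × n) (ZMod d × n) ℂ,
      IsPOVM Bt ∧ ∀ ab : ZMod d × ZMod d, ∀ ω ∈ S0, ∀ σ ∈ Sin,
        (bell d ab * idTensor L (ω ⊗ₖ σ)).trace = (Bt ab * (ω ⊗ₖ σ)).trace) :
    ∃ E : Matrix n n ℂ →ₗ[ℂ] Matrix (ZMod d) (ZMod d) ℂ,
      IsCPTP E ∧ ∀ σ ∈ Sin, E σ = L σ :=
  stmt10_general d S0 hS0complete Sin L hBell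
end

section
/- Let ρ_{AB} on H_A ⊗ H_B and σ_{AB'} on H_A ⊗ H_{B'} be bipartite density matrices (finite dimensions). Suppose that for every finite decision set X and every family of self-adjoint payoff operators (O^i_A)_{i∈X} on H_A, max over POVMs (P^i_B) on H_B of Σ_i Tr[(O^i_A ⊗ P^i_B) ρ_{AB}] is at least max over POVMs (N^i_{B'}) on H_{B'} of Σ_i Tr[(O^i_A ⊗ N^i_{B'}) σ_{AB'}]. Then for every finite X and every POVM (N^i_{B'}) on H_{B'}, there exists a POVM (M̄^i_B) on H_B such that Tr_B[(1_A ⊗ M̄^i_B) ρ_{AB}] = Tr_{B'}[(1_A ⊗ N^i_{B'}) σ_{AB'}] for all i ∈ X. -/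
open scoped BigOperators Matrix Kronecker ComplexOrder
open Matrix

/-!
The tuples `(Tr_B[(1 ⊗ Mᵢ) ρ])ᵢ`, `M` ranging over POVMs on `H_B`, form a compact convex set `C`.
If the tuple `tᵢ = Tr_B'[(1 ⊗ Nᵢ) σ]` were outside `C`, a functional separating it from `C` is,
on tuples of Hermitian operators, of the form `A ↦ Re ∑ᵢ tr (Oᵢ Aᵢ)` with `Oᵢ` Hermitian, and
`tr ((Oᵢ ⊗ Pᵢ) ρ) = tr (Oᵢ Tr_B[(1 ⊗ Pᵢ) ρ])`. So in the game with payoffs `O`, the POVM `N` earns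
more against `σ` than any POVM against `ρ`, contradicting the hypothesis.
-/

-- Any norm would do: it only serves to view the usual topology on matrices as a normed one.
attribute [local instance] Matrix.normedAddCommGroup Matrix.normedSpace

namespace Matrix

variable {n : Type*}

lemma nonempty_of_trace_eq_one [Fintype n] {A : Matrix n n ℂ}
    (h : A.trace = 1) : Nonempty n := by
  by_contra hn
  rw [not_nonempty_iff] at hn
  simp [trace] at h

lemma isClosed_setOf_posSemidef [Fintype n] : IsClosed {A : Matrix n n ℂ | A.PosSemidef} := by
  simp only [posSemidef_iff_dotProduct_mulVec, Set.ofPred_and, Set.ofPred_forall]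
  exact (isClosed_eq (by fun_prop) (by fun_prop)).inter
    (isClosed_iInter fun v => isClosed_le continuous_const (by fun_prop))

lemma PosSemidef.norm_apply_sq_le {A : Matrix n n ℂ} (hA : A.PosSemidef) (x y : n) :
    ‖A x y‖ ^ 2 ≤ (A x x).re * (A y y).re := by
  have hdet := (hA.submatrix ![x, y]).det_nonneg
  simp only [det_fin_two, submatrix_apply, cons_val_zero, cons_val_one, cons_val_fin_one,
    ← hA.isHermitian.apply y x, RCLike.star_def, Complex.mul_conj'] at hdet
  have hxx := (Complex.nonneg_iff.1 (hA.diag_nonneg (i := x))).2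
  have hyy := (Complex.nonneg_iff.1 (hA.diag_nonneg (i := y))).2
  have hre := (Complex.nonneg_iff.1 hdet).1
  rw [Complex.sub_re, Complex.mul_re, ← hxx, ← hyy, ← Complex.ofReal_pow, Complex.ofReal_re] at hre
  linarith

end Matrix

section POVM

variable {n X : Type*} [Fintype n] [DecidableEq n] [Fintype X]

lemma IsPOVM.re_apply_self_le_one {P : X → Matrix n n ℂ} (hP : IsPOVM P) (i : X) (x : n) :
    (P i x x).re ≤ 1 := by
  have hsum : ∑ j, (P j x x).re = 1 := by
    simpa [← Complex.re_sum, Matrix.sum_apply] using congr_arg (fun M => (M x x).re) hP.2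
  rw [← hsum]
  exact Finset.single_le_sum (fun j _ => (Complex.nonneg_iff.1 (hP.1 j).diag_nonneg).1)
    (Finset.mem_univ i)

lemma IsPOVM.norm_apply_le_one {P : X → Matrix n n ℂ} (hP : IsPOVM P) (i : X) (x y : n) :
    ‖P i x y‖ ≤ 1 := by
  have hx := hP.re_apply_self_le_one i x
  have hy := hP.re_apply_self_le_one i y
  have hx0 := (Complex.nonneg_iff.1 ((hP.1 i).diag_nonneg (i := x))).1
  have hy0 := (Complex.nonneg_iff.1 ((hP.1 i).diag_nonneg (i := y))).1
  have := (hP.1 i).norm_apply_sq_le x y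
  nlinarith [norm_nonneg (P i x y), mul_le_one₀ hx hy0 hy]

lemma isClosed_setOf_isPOVM : IsClosed {P : X → Matrix n n ℂ | IsPOVM P} := by
  simp only [IsPOVM, Set.ofPred_and, Set.ofPred_forall]
  exact (isClosed_iInter fun i =>
    (Matrix.isClosed_setOf_posSemidef (n := n)).preimage (continuous_apply i)).inter
    (isClosed_eq (continuous_finsetSum _ fun i _ => continuous_apply i) continuous_const)

lemma isCompact_setOf_isPOVM : IsCompact {P : X → Matrix n n ℂ | IsPOVM P} := by
  refine Metric.isCompact_of_isClosed_isBounded isClosed_setOf_isPOVM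
    ((Metric.isBounded_closedBall (x := 0) (r := 1)).subset fun P hP => ?_)
  rw [mem_closedBall_zero_iff, pi_norm_le_iff_of_nonneg zero_le_one]
  exact fun i => (Matrix.norm_le_iff zero_le_one).2 (hP.norm_apply_le_one i)

lemma convex_setOf_isPOVM : Convex ℝ {P : X → Matrix n n ℂ | IsPOVM P} := by
  rintro P hP Q hQ s t hs ht hst
  refine ⟨fun i => ((hP.1 i).smul hs).add ((hQ.1 i).smul ht), ?_⟩
  simp only [Pi.add_apply, Pi.smul_apply, Finset.sum_add_distrib, ← Finset.smul_sum, hP.2, hQ.2,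
    ← add_smul, hst, one_smul]

lemma exists_isPOVM [Nonempty X] : ∃ P : X → Matrix n n ℂ, IsPOVM P := by
  classical
  obtain ⟨i⟩ := ‹Nonempty X›
  refine ⟨Pi.single i 1, fun j => ?_, by simp⟩
  rcases eq_or_ne j i with rfl | h
  · simpa using Matrix.PosSemidef.one
  · simpa [h] using Matrix.PosSemidef.zero

lemma IsPOVM.nonempty_index [Nonempty n] {P : X → Matrix n n ℂ} (hP : IsPOVM P) : Nonempty X := by
  by_contra hX
  rw [not_nonempty_iff] at hX
  simpa using hP.2.symm

end POVM

section Steering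

variable {a b : Type*} [Fintype a] [DecidableEq a] [Fintype b]

noncomputable def steer (ρ : Matrix (a × b) (a × b) ℂ) : Matrix b b ℂ →ₗ[ℂ] Matrix a a ℂ where
  toFun M := ptrB (((1 : Matrix a a ℂ) ⊗ₖ M) * ρ)
  map_add' M N := by
    ext x x'
    simp [Matrix.kronecker_add, Matrix.add_mul, ptrB, Finset.sum_add_distrib]
  map_smul' c M := by
    simp only [Matrix.kronecker_smul, Matrix.smul_mul]
    ext x x'
    simp [ptrB, Finset.mul_sum]

lemma steer_apply (ρ : Matrix (a × b) (a × b) ℂ) (M : Matrix b b ℂ) :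
    steer ρ M = ptrB (((1 : Matrix a a ℂ) ⊗ₖ M) * ρ) := rfl

lemma steer_apply_apply (ρ : Matrix (a × b) (a × b) ℂ) (M : Matrix b b ℂ) (x x' : a) :
    steer ρ M x x' = ∑ y, ∑ v, M y v * ρ (x, v) (x', y) := by
  simp [steer_apply, ptrB, Matrix.mul_apply, Matrix.one_apply, Fintype.sum_prod_type, ite_mul]

lemma trace_kronecker_mul_eq_trace_mul_steer (O : Matrix a a ℂ) (P : Matrix b b ℂ)
    (ρ : Matrix (a × b) (a × b) ℂ) :
    ((O ⊗ₖ P) * ρ).trace = (O * steer ρ P).trace := by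
  simp only [Matrix.trace, Matrix.diag_apply, Matrix.mul_apply, steer_apply_apply,
    Matrix.kroneckerMap_apply, Fintype.sum_prod_type, Finset.mul_sum]
  refine Finset.sum_congr rfl fun x _ => ?_
  rw [Finset.sum_comm]
  refine Finset.sum_congr rfl fun u _ => Finset.sum_congr rfl fun y _ =>
    Finset.sum_congr rfl fun v _ => by ring

lemma Matrix.IsHermitian.steer {ρ : Matrix (a × b) (a × b) ℂ} (hρ : ρ.IsHermitian)
    {M : Matrix b b ℂ} (hM : M.IsHermitian) : (steer ρ M).IsHermitian := by
  ext x x'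
  simp only [Matrix.conjTranspose_apply, steer_apply_apply, star_sum, star_mul', hM.apply,
    hρ.apply]
  exact Finset.sum_comm

end Steering

section TraceDuality

variable {a X : Type*} [Fintype a] [DecidableEq a] [Fintype X] [DecidableEq X]

lemma Matrix.exists_eq_trace_mul (φ : Matrix a a ℂ →ₗ[ℂ] ℂ) :
    ∃ B : Matrix a a ℂ, ∀ A, φ A = (B * A).trace := by
  refine ⟨Matrix.of fun y x => φ (Matrix.single x y 1), fun A => ?_⟩
  conv_lhs => rw [A.matrix_eq_sum_single]
  simp only [map_sum, Matrix.trace, Matrix.diag_apply, Matrix.mul_apply, Matrix.of_apply]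
  rw [Finset.sum_comm]
  refine Finset.sum_congr rfl fun x _ => Finset.sum_congr rfl fun y _ => ?_
  simpa [mul_comm] using φ.map_smul (A y x) (Matrix.single y x 1)

lemma Matrix.exists_isHermitian_re_eq_re_trace_mul (φ : Matrix a a ℂ →ₗ[ℂ] ℂ) :
    ∃ O : Matrix a a ℂ, O.IsHermitian ∧ ∀ A, A.IsHermitian → (φ A).re = (O * A).trace.re := by
  obtain ⟨B, hB⟩ := Matrix.exists_eq_trace_mul φ
  refine ⟨(2⁻¹ : ℝ) • (B + Bᴴ), (B.isHermitian_add_transpose_self).smul (.all _), fun A hA => ?_⟩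
  have hstar : (Bᴴ * A).trace = star (B * A).trace := by
    rw [← Matrix.trace_conjTranspose, Matrix.conjTranspose_mul, hA.eq, Matrix.trace_mul_comm]
  rw [hB, Matrix.smul_mul, Matrix.trace_smul, Matrix.add_mul, Matrix.trace_add, hstar,
    Complex.real_smul, Complex.re_ofReal_mul, Complex.add_re, Complex.star_def, Complex.conj_re]
  ring

lemma exists_isHermitian_re_eq_re_sum_trace_mul (φ : (X → Matrix a a ℂ) →ₗ[ℂ] ℂ) :
    ∃ O : X → Matrix a a ℂ, (∀ i, (O i).IsHermitian) ∧
      ∀ A, (∀ i, (A i).IsHermitian) → (φ A).re = (∑ i, (O i * A i).trace).re := by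
  choose O hO hφO using fun i => Matrix.exists_isHermitian_re_eq_re_trace_mul
    (φ ∘ₗ LinearMap.single ℂ (fun _ => Matrix a a ℂ) i)
  refine ⟨O, hO, fun A hA => ?_⟩
  conv_lhs => rw [← Finset.univ_sum_single A]
  simp only [map_sum, Complex.re_sum]
  exact Finset.sum_congr rfl fun i _ => hφO i (A i) (hA i)

end TraceDuality

section Game

variable {a b X : Type*} [Fintype a] [Fintype b] [DecidableEq b] [Fintype X]

lemma le_gameSup (ρ : Matrix (a × b) (a × b) ℂ) (O : X → Matrix a a ℂ) {P : X → Matrix b b ℂ}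
    (hP : IsPOVM P) : (∑ i, ((O i ⊗ₖ P i) * ρ).trace).re ≤ gameSup ρ O := by
  classical
  have hcont : Continuous fun P : X → Matrix b b ℂ => (∑ i, ((O i ⊗ₖ P i) * ρ).trace).re := by
    simp only [trace_kronecker_mul_eq_trace_mul_steer]
    have := (steer ρ).continuous_of_finiteDimensional
    fun_prop
  refine le_csSup ?_ ⟨P, hP, rfl⟩
  obtain ⟨u, hu⟩ := (isCompact_setOf_isPOVM.image hcont).bddAbove
  exact ⟨u, by rintro s ⟨P, hP, rfl⟩; exact hu ⟨P, hP, rfl⟩⟩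

lemma gameSup_le [Nonempty X] {ρ : Matrix (a × b) (a × b) ℂ} {O : X → Matrix a a ℂ} {u : ℝ}
    (h : ∀ P : X → Matrix b b ℂ, IsPOVM P → (∑ i, ((O i ⊗ₖ P i) * ρ).trace).re ≤ u) :
    gameSup ρ O ≤ u := by
  obtain ⟨P, hP⟩ := exists_isPOVM (n := b) (X := X)
  exact csSup_le ⟨_, P, hP, rfl⟩ (by rintro s ⟨P, hP, rfl⟩; exact h P hP)

lemma exists_gameSup_lt_of_notMem [DecidableEq a] [Nonempty X]
    {ρ : Matrix (a × b) (a × b) ℂ} (hρ : ρ.IsHermitian) {t : X → Matrix a a ℂ}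
    (ht : ∀ i, (t i).IsHermitian)
    (hnot : t ∉ LinearMap.compLeft (steer ρ) X '' {P | IsPOVM P}) :
    ∃ O : X → Matrix a a ℂ, (∀ i, (O i).IsHermitian) ∧
      gameSup ρ O < (∑ i, (O i * t i).trace).re := by
  classical
  have hconvex := convex_setOf_isPOVM.linear_image
    ((LinearMap.compLeft (steer ρ) X).restrictScalars ℝ)
  have hclosed := (isCompact_setOf_isPOVM.image
    (LinearMap.compLeft (steer ρ) X).continuous_of_finiteDimensional).isClosed
  have : LocallyConvexSpace ℝ (X → Matrix a a ℂ) := NormedSpace.toLocallyConvexSpace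
  obtain ⟨φ, u, hlt, hut⟩ :=
    RCLike.geometric_hahn_banach_closed_point (𝕜 := ℂ) hconvex hclosed hnot
  obtain ⟨O, hO, hφO⟩ := exists_isHermitian_re_eq_re_sum_trace_mul φ.toLinearMap
  have hpayoff (P : X → Matrix b b ℂ) (hP : IsPOVM P) :
      (∑ i, ((O i ⊗ₖ P i) * ρ).trace).re < u := by
    simp only [trace_kronecker_mul_eq_trace_mul_steer]
    rw [← hφO _ fun i => hρ.steer (hP.1 i).isHermitian]
    exact hlt _ ⟨P, hP, rfl⟩
  refine ⟨O, hO, ?_⟩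
  calc gameSup ρ O ≤ u := gameSup_le fun P hP => (hpayoff P hP).le
    _ < (φ t).re := hut
    _ = (∑ i, (O i * t i).trace).re := hφO t ht

end Game

/-- Shmaya's lemma (Lemma 1). -/
theorem stmt11 {a b b' : Type*} [Fintype a] [DecidableEq a]
    [Fintype b] [DecidableEq b] [Fintype b'] [DecidableEq b']
    (ρ : Matrix (a × b) (a × b) ℂ) (hρ : IsDensity ρ)
    (σ : Matrix (a × b') (a × b') ℂ) (hσ : IsDensity σ)
    (hord : ∀ (X : Type) [Fintype X] (O : X → Matrix a a ℂ),
      (∀ i, (O i).IsHermitian) → gameSup σ O ≤ gameSup ρ O) :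
    ∀ (X : Type) [Fintype X] (N : X → Matrix b' b' ℂ), IsPOVM N →
      ∃ M : X → Matrix b b ℂ, IsPOVM M ∧
        ∀ i, ptrB (((1 : Matrix a a ℂ) ⊗ₖ M i) * ρ) =
          ptrB (((1 : Matrix a a ℂ) ⊗ₖ N i) * σ) := by
  intro X _ N hN
  have : Nonempty b' := (Matrix.nonempty_of_trace_eq_one hσ.2).map Prod.snd
  have : Nonempty X := hN.nonempty_index
  obtain ⟨M, hM, hMN⟩ :
      (fun i => steer σ (N i)) ∈ LinearMap.compLeft (steer ρ) X '' {P | IsPOVM P} := by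
    by_contra hnot
    obtain ⟨O, hO, hlt⟩ := exists_gameSup_lt_of_notMem hρ.1.isHermitian
      (fun i => hσ.1.isHermitian.steer (hN.1 i).isHermitian) hnot
    have hN_payoff := le_gameSup σ O hN
    simp only [trace_kronecker_mul_eq_trace_mul_steer] at hN_payoff
    linarith [hord X O hO]
  exact ⟨M, hM, fun i => congr_fun hMN i⟩
end

section
/- For d ≥ 2 and p ∈ (0, 1], the isotropic state ω^p = p Ψ⁺ + (1−p) 1/d² on H ⊗ H (dim H = d, Ψ⁺ a maximally entangled pure state projector) has local state space S_Y(ω^p) = { p σ + (1−p) 1/d : σ a density matrix on H }, and this set contains d² linearly independent density matrices (i.e. it is a complete state space). -/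
open scoped BigOperators Matrix Kronecker ComplexOrder
open Matrix

/-- The isotropic state `ω^p = p Ψ⁺ + (1-p) 1/d²`. -/
noncomputable def isotropic (d : ℕ) [NeZero d] (p : ℝ) :
    Matrix (ZMod d × ZMod d) (ZMod d × ZMod d) ℂ :=
  (p : ℂ) • maxEnt d + (((1 - p) / (d ^ 2) : ℝ) : ℂ) • 1

/-!
Measuring the effect `P` on `X` leaves `Y` in the state proportional to
`Tr_X[(P ⊗ 1) ω^p] = (p / d) Pᵀ + ((1 - p) / d²) (Tr P) 1`, with normalisation `Tr P / d`.
Hence the conditional states are exactly `p σ + (1 - p) 1/d` with `σ = Pᵀ / Tr P`, and every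
density matrix `σ` arises from the effect `P = σᵀ`, which satisfies `P ≤ 1` because `Tr σ = 1`.

For completeness, polarization writes every matrix unit as a combination of rank-one projectors,
so density matrices span all `d × d` matrices and contain `d²` linearly independent ones. The
affine map `σ ↦ p σ + (1 - p) 1/d` keeps them independent: it is injective for `p ≠ 0` and
preserves the trace, which is `1` on all of them.
-/

open scoped MatrixOrder in
theorem Matrix.PosSemidef.one_sub_of_trace_eq_one {n : Type*} [Fintype n] [DecidableEq n]
    {σ : Matrix n n ℂ} (hσ : σ.PosSemidef) (htr : σ.trace = 1) : (1 - σ).PosSemidef := by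
  have hsum : ∑ i, hσ.isHermitian.eigenvalues i = 1 := by
    apply Complex.ofReal_injective
    push_cast
    rw [← htr, hσ.isHermitian.trace_eq_sum_eigenvalues]
    rfl
  rw [← nonneg_iff_posSemidef, sub_nonneg, ← map_one (algebraMap ℝ (Matrix n n ℂ)),
    le_algebraMap_iff_spectrum_le hσ.isHermitian.isSelfAdjoint,
    hσ.isHermitian.spectrum_real_eq_range_eigenvalues]
  rintro _ ⟨i, rfl⟩
  rw [← hsum]
  exact Finset.single_le_sum (fun j _ => hσ.eigenvalues_nonneg j) (Finset.mem_univ i)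

theorem IsDensity.smul_add_smul_one {n : Type*} [Fintype n] [DecidableEq n] [Nonempty n]
    {σ : Matrix n n ℂ} (hσ : IsDensity σ) {p : ℝ} (hp0 : 0 ≤ p) (hp1 : p ≤ 1) :
    IsDensity ((p : ℂ) • σ + (((1 - p) / Fintype.card n : ℝ) : ℂ) • 1) := by
  have hc : (0 : ℂ) ≤ (((1 - p) / Fintype.card n : ℝ) : ℂ) :=
    Complex.zero_le_real.mpr (div_nonneg (sub_nonneg.mpr hp1) (Nat.cast_nonneg _))
  refine ⟨(hσ.1.smul (Complex.zero_le_real.mpr hp0)).add (PosSemidef.one.smul hc), ?_⟩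
  have hn : (Fintype.card n : ℂ) ≠ 0 := Nat.cast_ne_zero.mpr Fintype.card_ne_zero
  rw [trace_add, trace_smul, trace_smul, hσ.2, trace_one, smul_eq_mul, smul_eq_mul]
  push_cast
  field_simp
  ring

theorem isDensity_trace_inv_smul {n : Type*} [Fintype n] {M : Matrix n n ℂ} (hM : M.PosSemidef)
    (h0 : M.trace ≠ 0) : IsDensity (M.trace⁻¹ • M) :=
  ⟨hM.smul (inv_nonneg_of_nonneg hM.trace_nonneg), by
    rw [trace_smul, smul_eq_mul, inv_mul_cancel₀ h0]⟩

theorem Matrix.PosSemidef.mem_span_isDensity {n : Type*} [Fintype n] {M : Matrix n n ℂ}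
    (hM : M.PosSemidef) : M ∈ Submodule.span ℂ {ρ | IsDensity ρ} := by
  by_cases h0 : M.trace = 0
  · rw [hM.trace_eq_zero_iff.mp h0]
    exact Submodule.zero_mem _
  · rw [← smul_inv_smul₀ h0 M]
    exact Submodule.smul_mem _ _ (Submodule.subset_span (isDensity_trace_inv_smul hM h0))

theorem vecMulVec_star_polarization {n : Type*} (x y : n → ℂ) :
    (4 : ℂ) • vecMulVec x (star y) =
      vecMulVec (x + y) (star (x + y)) - vecMulVec (x - y) (star (x - y)) +
        Complex.I • vecMulVec (x + Complex.I • y) (star (x + Complex.I • y)) -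
        Complex.I • vecMulVec (x - Complex.I • y) (star (x - Complex.I • y)) := by
  ext a b
  simp only [Matrix.smul_apply, Matrix.sub_apply, Matrix.add_apply, vecMulVec_apply,
    Pi.add_apply, Pi.sub_apply, Pi.smul_apply, Pi.star_apply, star_add, star_sub, star_smul,
    smul_eq_mul, Complex.star_def, Complex.conj_I]
  linear_combination
    (2 * x a * (starRingEnd ℂ) (y b) - 2 * y a * (starRingEnd ℂ) (x b)) * Complex.I_sq

theorem span_isDensity_eq_top (n : Type*) [Fintype n] [DecidableEq n] :
    Submodule.span ℂ {ρ : Matrix n n ℂ | IsDensity ρ} = ⊤ := by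
  set S := Submodule.span ℂ {ρ : Matrix n n ℂ | IsDensity ρ}
  have hrank_one (v : n → ℂ) : vecMulVec v (star v) ∈ S :=
    (posSemidef_vecMulVec_self_star v).mem_span_isDensity
  rw [eq_top_iff, ← (stdBasis ℂ n n).span_eq, Submodule.span_le]
  rintro _ ⟨⟨a, b⟩, rfl⟩
  have hsingle : single a b (1 : ℂ) = vecMulVec (Pi.single a 1) (star (Pi.single b 1)) := by
    rw [single_eq_single_vecMulVec_single, Pi.star_single, star_one]
  rw [SetLike.mem_coe, stdBasis_eq_single, hsingle,
    ← inv_smul_smul₀ (four_ne_zero' ℂ) (vecMulVec _ _), vecMulVec_star_polarization]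
  refine S.smul_mem _ (S.sub_mem (S.add_mem (S.sub_mem ?_ ?_) (S.smul_mem _ ?_)) (S.smul_mem _ ?_))
    <;> exact hrank_one _

theorem exists_linearIndependent_isDensity (n : Type*) [Fintype n] [DecidableEq n] :
    ∃ f : n × n → Matrix n n ℂ, LinearIndependent ℂ f ∧ ∀ k, IsDensity (f k) := by
  obtain ⟨b, hb, hspan, hli⟩ := exists_linearIndependent ℂ {ρ : Matrix n n ℂ | IsDensity ρ}
  have htop : ⊤ ≤ Submodule.span ℂ (Set.range ((↑) : b → Matrix n n ℂ)) := by
    rw [Subtype.range_coe, hspan, span_isDensity_eq_top]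
  obtain ⟨e⟩ : Nonempty (b ≃ n × n) := ⟨(Module.Basis.mk hli htop).indexEquiv (stdBasis ℂ n n)⟩
  exact ⟨fun k => e.symm k, hli.comp e.symm e.symm.injective, fun k => hb (e.symm k).2⟩

theorem LinearIndependent.smul_add_const {ι K V : Type*} [Field K] [AddCommGroup V] [Module K V]
    {v : ι → V} (hv : LinearIndependent K v) (φ : V →ₗ[K] K) (hφ : ∀ i, φ (v i) = 1)
    {p : K} (hp : p ≠ 0) (w : V) (hw : p + φ w ≠ 0) :
    LinearIndependent K (fun i => p • v i + w) := by
  let T : V →ₗ[K] V := p • LinearMap.id + φ.smulRight w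
  have hT : LinearMap.ker T = ⊥ := by
    refine LinearMap.ker_eq_bot'.mpr fun x hx => ?_
    have hTx : p • x + φ x • w = 0 := hx
    have hφx : φ x * (p + φ w) = 0 := by
      have := congrArg φ hTx
      simp only [map_add, map_smul, smul_eq_mul, map_zero] at this
      linear_combination this
    rw [(mul_eq_zero.mp hφx).resolve_right hw, zero_smul, add_zero] at hTx
    exact (smul_eq_zero.mp hTx).resolve_left hp
  have hTv (i : ι) : T (v i) = p • v i + w := by simp [T, hφ]
  simpa only [Function.comp_def, hTv] using hv.map' T hT

theorem trace_ptrA {a b : Type*} [Fintype a] [Fintype b] (M : Matrix (a × b) (a × b) ℂ) :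
    (ptrA M).trace = M.trace := by
  simp only [trace, diag, ptrA, of_apply, Fintype.sum_prod_type]
  exact Finset.sum_comm

theorem ptrA_kron_one_mul_isotropic (d : ℕ) [NeZero d] (p : ℝ) (P : Matrix (ZMod d) (ZMod d) ℂ) :
    ptrA ((P ⊗ₖ (1 : Matrix (ZMod d) (ZMod d) ℂ)) * isotropic d p) =
      ((p : ℂ) / d) • Pᵀ + ((((1 - p) / d ^ 2 : ℝ) : ℂ) * P.trace) • 1 := by
  ext y y'
  rw [isotropic, mul_add, mul_smul_comm, mul_smul_comm, mul_one]
  by_cases h : y = y' <;>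
    simp [h, ptrA, maxEnt, mul_apply, Fintype.sum_prod_type, one_apply, trace, ite_and,
      Finset.mul_sum, Finset.sum_add_distrib, div_eq_mul_inv, mul_comm, mul_left_comm]

theorem trace_kron_one_mul_isotropic (d : ℕ) [NeZero d] (p : ℝ) (P : Matrix (ZMod d) (ZMod d) ℂ) :
    ((P ⊗ₖ (1 : Matrix (ZMod d) (ZMod d) ℂ)) * isotropic d p).trace = P.trace / d := by
  have hd : (d : ℂ) ≠ 0 := NeZero.ne _
  rw [← trace_ptrA, ptrA_kron_one_mul_isotropic, trace_add, trace_smul, trace_smul,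
    trace_transpose, trace_one, ZMod.card]
  simp only [smul_eq_mul, Complex.ofReal_div, Complex.ofReal_sub, Complex.ofReal_one,
    Complex.ofReal_pow, Complex.ofReal_natCast]
  field_simp
  ring

theorem SB_isotropic (d : ℕ) [NeZero d] (p : ℝ) :
    SB (isotropic d p) =
      {τ | ∃ σ : Matrix (ZMod d) (ZMod d) ℂ, IsDensity σ ∧
        τ = (p : ℂ) • σ + (((1 - p) / d : ℝ) : ℂ) • 1} := by
  have hd : (d : ℂ) ≠ 0 := NeZero.ne _
  ext τ
  constructor
  · rintro ⟨P, r, hP, -, hr, htr, rfl⟩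
    rw [trace_kron_one_mul_isotropic] at htr
    have hr0 : (r : ℂ) ≠ 0 := by exact_mod_cast hr.ne'
    have htrP : P.trace = r * d := by rw [← htr]; field_simp
    have hc : (0 : ℂ) ≤ ((d * r : ℝ) : ℂ)⁻¹ :=
      inv_nonneg_of_nonneg (Complex.zero_le_real.mpr (by positivity))
    refine ⟨((d * r : ℝ) : ℂ)⁻¹ • Pᵀ, ⟨hP.transpose.smul hc, ?_⟩, ?_⟩
    · rw [trace_smul, trace_transpose, htrP, smul_eq_mul]
      push_cast
      field_simp
    · rw [ptrA_kron_one_mul_isotropic, htrP, smul_add, smul_smul, smul_smul, smul_smul]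
      congr 2 <;> push_cast <;> field_simp
  · rintro ⟨σ, ⟨hσ, htr⟩, rfl⟩
    refine ⟨σᵀ, (d : ℝ)⁻¹, hσ.transpose, ?_, inv_pos.mpr (Nat.cast_pos.mpr (NeZero.pos d)), ?_, ?_⟩
    · simpa using (hσ.one_sub_of_trace_eq_one htr).transpose
    · rw [trace_kron_one_mul_isotropic, trace_transpose, htr]
      push_cast
      ring
    · rw [ptrA_kron_one_mul_isotropic, transpose_transpose, trace_transpose, htr, smul_add,
        smul_smul, smul_smul]
      congr 2 <;> push_cast <;> field_simp

theorem stmt16_general (d : ℕ) [NeZero d] (p : ℝ) (hp0 : 0 < p) (hp1 : p ≤ 1) :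
    SB (isotropic d p) =
      {τ | ∃ σ : Matrix (ZMod d) (ZMod d) ℂ, IsDensity σ ∧
        τ = (p : ℂ) • σ + (((1 - p) / d : ℝ) : ℂ) • 1} ∧
    ∃ f : Fin (d ^ 2) → Matrix (ZMod d) (ZMod d) ℂ,
      (∀ k, f k ∈ SB (isotropic d p)) ∧ LinearIndependent ℂ f ∧ ∀ k, IsDensity (f k) := by
  obtain ⟨f, hli, hf⟩ := exists_linearIndependent_isDensity (ZMod d)
  have hd : (d : ℂ) ≠ 0 := NeZero.ne _
  have htr : (p : ℂ) + traceLinearMap (ZMod d) ℂ ℂ ((((1 - p) / d : ℝ) : ℂ) • 1) = 1 := by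
    rw [traceLinearMap_apply, trace_smul, trace_one, ZMod.card, smul_eq_mul]
    push_cast
    field_simp
    ring
  have hli' := hli.smul_add_const (traceLinearMap _ ℂ ℂ) (fun k => (hf k).2)
    (Complex.ofReal_ne_zero.mpr hp0.ne') _ (htr ▸ one_ne_zero)
  have hcard : Fintype.card (ZMod d × ZMod d) = d ^ 2 := by simp [ZMod.card, sq]
  let e := (Fintype.equivFinOfCardEq hcard).symm
  refine ⟨SB_isotropic d p, fun k => (p : ℂ) • f (e k) + (((1 - p) / d : ℝ) : ℂ) • 1,
    fun k => ?_, hli'.comp e e.injective, fun k => ?_⟩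
  · rw [SB_isotropic]
    exact ⟨f (e k), hf _, rfl⟩
  · simpa [ZMod.card] using (hf (e k)).smul_add_smul_one hp0.le hp1

/-- The local state space of the isotropic state, and its completeness. -/
theorem stmt16 (d : ℕ) [NeZero d] (hd : 2 ≤ d) (p : ℝ) (hp0 : 0 < p) (hp1 : p ≤ 1) :
    SB (isotropic d p) =
      {τ | ∃ σ : Matrix (ZMod d) (ZMod d) ℂ, IsDensity σ ∧
        τ = (p : ℂ) • σ + (((1 - p) / d : ℝ) : ℂ) • 1} ∧
    ∃ f : Fin (d ^ 2) → Matrix (ZMod d) (ZMod d) ℂ,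
      (∀ k, f k ∈ SB (isotropic d p)) ∧ LinearIndependent ℂ f ∧ ∀ k, IsDensity (f k) :=
  stmt16_general d p hp0 hp1
end
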